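/- arXiv:1610.00145 — 2 statements merged into one kernel-verified Lean document; each statement's English description precedes it below -/
import Mathlib

section
/- Let X be a metric space, locally path-connected, and G ⊴ π₁(X) a normal subgroup. If G is not open, then there exists a point y ∈ X and a sequence of loops (l_n) based at y with diam(l_n) → 0 such that [l_n] ∉ G for all n. -/
/-!
Argue by contraposition: suppose that at every point all loops of small enough diameter lie in
`G`. Call two paths `f g : a ⟶ b` equivalent when `f ≫ g⁻¹`, transported to `x₀`, lies in `G`;
this is a congruence on the fundamental groupoid. By local path-connectedness, two paths with
common endpoints that stay in a small neighbourhood of a point are equivalent, and by compactness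
these neighbourhoods can be taken to be balls of one radius along a given loop `p`. If `q` is
uniformly close to `p`, join `p s` to `q s` by short paths: over a short interval `[s, s']` the
square formed by these and the pieces of `p` and `q` is small, so the initial segments of `p` and
`q` stay equivalent from `s = 0` to `s = 1`. Hence `q ∈ G` whenever `p ∈ G`.
-/

open FundamentalGroup Filter

attribute [local instance] Path.Homotopic.setoid

/-- A loop `p` based at an arbitrary point `y` represents an element of the normal subgroup
`G ⊴ π₁(X, x₀)` (regarded as basepoint-free) if conjugating it back to the basepoint `x₀`
along some path lands in `G`. -/
def loopInBF {X : Type} [TopologicalSpace X] {x₀ : X}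
    (G : Subgroup (FundamentalGroup X x₀)) {y : X} (p : Path y y) : Prop :=
  ∃ ρ : Path x₀ y,
    FundamentalGroup.fromPath (X := TopCat.of X)
      (⟦(ρ.trans p).trans ρ.symm⟧ : Path.Homotopic.Quotient x₀ x₀) ∈ G

open CategoryTheory Topology Metric Set unitInterval

namespace CategoryTheory

variable {C : Type*} [Groupoid C] {x₀ : C}

theorem End.inv_eq_inv (e : End x₀) : e⁻¹ = inv e := Groupoid.inv_eq_inv e

def homRelOfSubgroup (G : Subgroup (End x₀)) : HomRel C :=
  fun a _ f g => ∀ ρ : x₀ ⟶ a, (ρ ≫ f ≫ inv g ≫ inv ρ : End x₀) ∈ G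

instance (G : Subgroup (End x₀)) : Congruence (homRelOfSubgroup G) where
  comp_left f _ _ h ρ := by simpa using h (ρ ≫ f)
  comp_right _ h ρ := by simpa using h ρ
  equivalence :=
    { refl _ ρ := by simpa using G.one_mem
      symm h ρ := by simpa [End.inv_eq_inv] using G.inv_mem (h ρ)
      trans h h' ρ := by simpa [End.mul_def] using G.mul_mem (h' ρ) (h ρ) }

theorem homRelOfSubgroup_iff {G : Subgroup (End x₀)} [hG : G.Normal] {a b : C} (ρ₀ : x₀ ⟶ a)
    {f g : a ⟶ b} : homRelOfSubgroup G f g ↔ (ρ₀ ≫ f ≫ inv g ≫ inv ρ₀ : End x₀) ∈ G := by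
  refine ⟨fun h => h ρ₀, fun h ρ => ?_⟩
  simpa [End.mul_def, End.inv_eq_inv] using hG.conj_mem _ h (ρ₀ ≫ inv ρ : End x₀)

end CategoryTheory

theorem unitInterval.dist_le_of_mem_uIcc {s s' u : I} (hu : u ∈ uIcc s s') :
    dist u s ≤ dist s' s := by
  rw [Subtype.dist_eq, Subtype.dist_eq]
  refine Real.dist_le_of_mem_uIcc ?_ right_mem_uIcc
  rw [uIcc_comm] at hu
  exact ⟨hu.1, hu.2⟩

theorem PreconnectedSpace.forall_of_dist_lt {α : Type*} [PseudoMetricSpace α]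
    [PreconnectedSpace α] {S : α → Prop} {μ : ℝ} (hμ : 0 < μ)
    (hS : ∀ x y, dist x y < μ → S x → S y) {x : α} (hx : S x) : ∀ y, S y := by
  have : IsLocallyConstant S := (IsLocallyConstant.iff_eventually_eq S).2 fun x =>
    eventually_of_mem (ball_mem_nhds x hμ) fun y hy =>
      propext ⟨hS y x hy, hS x y (mem_ball'.1 hy)⟩
  exact fun y => this.apply_eq_of_preconnectedSpace x y ▸ hx

theorem IsCompact.exists_pos_forall_ball {α : Type*} [PseudoMetricSpace α] {K : Set α}
    (hK : IsCompact K) {P : Set α → Prop} (hP : ∀ ⦃s t⦄, s ⊆ t → P t → P s)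
    (hloc : ∀ x ∈ K, ∃ U ∈ 𝓝 x, P U) : ∃ δ > 0, ∀ x ∈ K, P (ball x δ) := by
  choose U hU hPU using hloc
  obtain ⟨V, hV, hVU⟩ := lebesgue_number_lemma_nhds' hK hU
  obtain ⟨δ, hδ, hδV⟩ := mem_uniformity_dist.1 hV
  refine ⟨δ, hδ, fun x hx => ?_⟩
  obtain ⟨y, hy⟩ := hVU x hx
  exact hP (fun z hz => hy (hδV (mem_ball'.1 hz))) (hPU y y.2)

theorem IsCompact.exists_pos_joinedIn_ball {X : Type*} [PseudoMetricSpace X]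
    [LocallyPathConnectedSpace X] {K : Set X} (hK : IsCompact K) {η : ℝ} (hη : 0 < η) :
    ∃ δ > 0, ∀ z ∈ K, ∀ x ∈ ball z δ, ∀ y ∈ ball z δ, JoinedIn (ball z η) x y := by
  obtain ⟨δ, hδ, hK⟩ := hK.exists_pos_forall_ball
    (P := fun s => ∃ V, s ⊆ V ∧ IsPathConnected V ∧ ∀ c ∈ V, ∀ c' ∈ V, dist c c' < η)
    (fun s t hst ⟨V, htV, hV⟩ => ⟨V, hst.trans htV, hV⟩) fun x _ => by
      obtain ⟨V, ⟨hVx, hV⟩, hVb⟩ :=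
        (path_connected_basis x).mem_iff.1 (ball_mem_nhds x (half_pos hη))
      refine ⟨V, hVx, V, subset_rfl, hV, fun c hc c' hc' => ?_⟩
      linarith [dist_triangle_right c c' x, mem_ball.1 (hVb hc), mem_ball.1 (hVb hc')]
  refine ⟨δ, hδ, fun z hz x hx y hy => ?_⟩
  obtain ⟨V, hzV, hV, hVη⟩ := hK z hz
  exact (hV.joinedIn x (hzV hx) y (hzV hy)).mono fun c hc =>
    hVη c hc z (hzV (mem_ball_self hδ))

theorem Path.eventually_forall_dist_lt {X : Type*} [PseudoMetricSpace X] {x y : X}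
    (p : Path x y) {θ : ℝ} (hθ : 0 < θ) :
    ∀ᶠ q in 𝓝 p, ∀ t, dist (q t) (p t) < θ :=
  ((continuous_induced_dom.tendsto p).eventually (ball_mem_nhds (p : C(I, X)) hθ)).mono
    fun _ hq t => (ContinuousMap.dist_apply_le_dist t).trans_lt hq

namespace Path

variable {X : Type*} [TopologicalSpace X]

def toHom {x y : X} (γ : Path x y) :
    FundamentalGroupoid.mk x ⟶ FundamentalGroupoid.mk y := ⟦γ⟧

@[simp] theorem toHom_refl (x : X) : (Path.refl x).toHom = 𝟙 _ := rfl

@[simp] theorem toHom_trans {x y z : X} (γ : Path x y) (δ : Path y z) :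
    (γ.trans δ).toHom = γ.toHom ≫ δ.toHom := rfl

@[simp] theorem toHom_symm {x y : X} (γ : Path x y) :
    γ.symm.toHom = CategoryTheory.inv γ.toHom := by
  rw [← Groupoid.inv_eq_inv]; rfl

theorem toHom_subpath_comp_subpath {a b : X} (γ : Path a b) (s₀ s₁ s₂ : I) :
    (γ.subpath s₀ s₁).toHom ≫ (γ.subpath s₁ s₂).toHom = (γ.subpath s₀ s₂).toHom :=
  Quotient.sound ⟨Homotopy.subpathTransSubpath γ s₀ s₁ s₂⟩

theorem toHom_cast {x y x' y' : X} (γ : Path x y) (hx : x' = x) (hy : y' = y) :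
    (γ.cast hx hy).toHom = eqToHom congr(FundamentalGroupoid.mk $hx) ≫ γ.toHom ≫
      eqToHom congr(FundamentalGroupoid.mk $hy.symm) :=
  (FundamentalGroupoid.conj_eqToHom (p := ⟦γ⟧) hx hy).symm

end Path

namespace CategoryTheory.HomRel

theorem rel_of_rel_eqToHom {C : Type*} [Category C] (r : HomRel C) [Congruence r]
    {a a' b b' : C} (ha : a' = a) (hb : b = b') {f g : a ⟶ b}
    (h : r (eqToHom ha ≫ f ≫ eqToHom hb) (eqToHom ha ≫ g ≫ eqToHom hb)) : r f g := by
  subst ha hb; simpa using h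

def IdentifiesPathsIn {X : Type*} [TopologicalSpace X] (r : HomRel (FundamentalGroupoid X))
    (U : Set X) : Prop :=
  ∀ ⦃w w' : X⦄ (f g : Path w w'), range f ⊆ U → range g ⊆ U → r f.toHom g.toHom

theorem IdentifiesPathsIn.mono {X : Type*} [TopologicalSpace X]
    {r : HomRel (FundamentalGroupoid X)} {U V : Set X} (h : r.IdentifiesPathsIn V) (hUV : U ⊆ V) :
    r.IdentifiesPathsIn U :=
  fun _ _ f g hf hg => h f g (hf.trans hUV) (hg.trans hUV)

variable {X : Type*} [PseudoMetricSpace X] (r : HomRel (FundamentalGroupoid X))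
  {a b : X} {p q : Path a b} {δ θ : ℝ}

theorem rel_subpath_square (hr : ∀ t, r.IdentifiesPathsIn (ball (p t) δ)) (hθ : θ ≤ δ / 4)
    (hpq : ∀ t, dist (q t) (p t) < θ) {s s' : I} (hp : ∀ u ∈ uIcc s s', dist (p u) (p s) < θ)
    {β : Path (p s) (q s)} {β' : Path (p s') (q s')} (hβ : range β ⊆ ball (p s) (δ / 2))
    (hβ' : range β' ⊆ ball (p s') (δ / 2)) :
    r ((p.subpath s s').toHom ≫ β'.toHom) (β.toHom ≫ (q.subpath s s').toHom) := by
  have hs' := hp s' right_mem_uIcc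
  have hθ₀ : 0 < θ := dist_nonneg.trans_lt hs'
  refine hr s _ _ ?_ ?_ <;> rw [Path.trans_range, Path.range_subpath] <;>
    refine union_subset ?_ ?_
  · rintro _ ⟨u, hu, rfl⟩
    exact mem_ball.2 (by linarith [hp u hu])
  · exact hβ'.trans (ball_subset_ball' (by linarith))
  · exact hβ.trans (ball_subset_ball (by linarith))
  · rintro _ ⟨u, hu, rfl⟩
    exact mem_ball.2 (by linarith [hp u hu, hpq u, dist_triangle (q u) (p u) (p s)])

theorem rel_subpath_step [Congruence r] (hr : ∀ t, r.IdentifiesPathsIn (ball (p t) δ))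
    (hθ : θ ≤ δ / 4) (hpq : ∀ t, dist (q t) (p t) < θ) {s s' : I}
    (hp : ∀ u ∈ uIcc s s', dist (p u) (p s) < θ)
    (hβ : ∃ β : Path (p s) (q s), range β ⊆ ball (p s) (δ / 2)) (α : Path (p 0) (q 0))
    (h : ∀ β : Path (p s) (q s), range β ⊆ ball (p s) (δ / 2) →
      r ((p.subpath 0 s).toHom ≫ β.toHom) (α.toHom ≫ (q.subpath 0 s).toHom))
    (β' : Path (p s') (q s')) (hβ' : range β' ⊆ ball (p s') (δ / 2)) :
    r ((p.subpath 0 s').toHom ≫ β'.toHom) (α.toHom ≫ (q.subpath 0 s').toHom) := by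
  obtain ⟨β, hβ⟩ := hβ
  rw [← p.toHom_subpath_comp_subpath 0 s s', ← q.toHom_subpath_comp_subpath 0 s s',
    Category.assoc]
  refine Congruence.equivalence.trans
    (comp_left _ (rel_subpath_square r hr hθ hpq hp hβ hβ')) ?_
  simpa using comp_right (q.subpath s s').toHom (h β hβ)

theorem exists_pos_rel_of_forall_dist_lt [LocallyPathConnectedSpace X] [Congruence r]
    (hr : ∀ x, ∃ U ∈ 𝓝 x, r.IdentifiesPathsIn U) (p : Path a b) :
    ∃ θ > 0, ∀ q : Path a b, (∀ t, dist (q t) (p t) < θ) → r p.toHom q.toHom := by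
  have hK : IsCompact (range p) := isCompact_range p.continuous
  obtain ⟨δ, hδ, hrδ⟩ := hK.exists_pos_forall_ball (P := r.IdentifiesPathsIn)
    (fun _ _ hst h => h.mono hst) fun x _ => hr x
  obtain ⟨δ', hδ', hjoin⟩ := hK.exists_pos_joinedIn_ball (half_pos hδ)
  set θ := min (δ / 4) δ'
  obtain ⟨μ, hμ, hpμ⟩ := Metric.uniformContinuous_iff.1 p.uniformContinuous θ (by positivity)
  refine ⟨θ, by positivity, fun q hpq => ?_⟩
  have hβ (s : I) : ∃ β : Path (p s) (q s), range β ⊆ ball (p s) (δ / 2) := by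
    obtain ⟨β, hβ⟩ := hjoin (p s) (mem_range_self s) (p s) (mem_ball_self hδ') (q s)
      ((hpq s).trans_le (min_le_right _ _))
    exact ⟨β, range_subset_iff.2 hβ⟩
  -- Constant connecting paths at both ends, so that at `s = 1` the invariant `hS` says `r p q`.
  let α : Path (p 0) (q 0) := (Path.refl a).cast p.source q.source
  have hS : ∀ (s : I) (β : Path (p s) (q s)), range β ⊆ ball (p s) (δ / 2) →
      r ((p.subpath 0 s).toHom ≫ β.toHom) (α.toHom ≫ (q.subpath 0 s).toHom) := by
    refine PreconnectedSpace.forall_of_dist_lt hμ (x := (0 : I)) ?_ ?_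
    · intro s s' hss' hs
      refine rel_subpath_step r (fun t => hrδ _ (mem_range_self t)) (min_le_left _ _) hpq
        (fun u hu => hpμ ?_) (hβ s) α hs
      exact (unitInterval.dist_le_of_mem_uIcc hu).trans_lt (dist_comm s s' ▸ hss')
    · intro β hβ
      simp only [Path.subpath_self, Path.toHom_refl, Category.id_comp, Category.comp_id]
      refine hrδ _ (mem_range_self 0) _ _ (hβ.trans (ball_subset_ball (by linarith))) ?_
      rintro _ ⟨t, rfl⟩
      simp [α, hδ]
  have h1 := hS 1 ((Path.refl b).cast p.target q.target) (by rintro _ ⟨t, rfl⟩; simp [hδ])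
  simp only [α, Path.subpath_zero_one, Path.toHom_cast, Path.toHom_refl, Category.id_comp,
    Category.assoc, eqToHom_trans, eqToHom_trans_assoc] at h1
  exact rel_of_rel_eqToHom r _ _ h1

end CategoryTheory.HomRel

section LoopInBF

theorem loopInBF_iff_exists {X : Type} [TopologicalSpace X] {x₀ : X}
    {G : Subgroup (FundamentalGroup X x₀)} {y : X} (p : Path y y) :
    loopInBF G p ↔ ∃ ρ : Path x₀ y, (ρ.toHom ≫ p.toHom ≫ inv ρ.toHom : End _) ∈ G := by
  refine exists_congr fun ρ => Iff.of_eq ?_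
  change (((ρ.trans p).trans ρ.symm).toHom ∈ G) = _
  simp

theorem loopInBF_iff_homRelOfSubgroup {X : Type} [TopologicalSpace X] [PathConnectedSpace X]
    {x₀ : X} {G : Subgroup (FundamentalGroup X x₀)} [G.Normal] {y : X} (p : Path y y) :
    loopInBF G p ↔ homRelOfSubgroup G p.toHom (𝟙 _) := by
  rw [loopInBF_iff_exists]
  refine ⟨fun ⟨ρ, hρ⟩ => (homRelOfSubgroup_iff ρ.toHom).2 (by simpa using hρ), fun h => ?_⟩
  exact ⟨PathConnectedSpace.somePath x₀ y, by simpa using (homRelOfSubgroup_iff _).1 h⟩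

variable {X : Type} [PseudoMetricSpace X] [LocallyPathConnectedSpace X] {x₀ : X}
  {G : Subgroup (FundamentalGroup X x₀)} [G.Normal]

theorem exists_mem_nhds_identifiesPathsIn {x : X}
    (hx : ∀ᶠ L in comap (fun L : Path x x => diam (range L)) (𝓝 0), loopInBF G L) :
    ∃ U ∈ 𝓝 x, (homRelOfSubgroup G).IdentifiesPathsIn U := by
  obtain ⟨ε, hε, hεL⟩ := (nhds_basis_ball.comap _).eventually_iff.1 hx
  obtain ⟨V, ⟨hVx, hV⟩, hVε⟩ :=
    (path_connected_basis x).mem_iff.1 (ball_mem_nhds x (by positivity : 0 < ε / 3))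
  refine ⟨V, hVx, fun w w' f g hf hg => ?_⟩
  obtain ⟨γ, hγ⟩ := hV.joinedIn x (mem_of_mem_nhds hVx) w (f.source ▸ hf (mem_range_self 0))
  set L := ((γ.trans f).trans g.symm).trans γ.symm
  have hLV : range L ⊆ V := by
    simp only [L, Path.trans_range, Path.symm_range, union_subset_iff]
    exact ⟨⟨⟨range_subset_iff.2 hγ, hf⟩, hg⟩, range_subset_iff.2 hγ⟩
  have hdiam : diam (range L) ≤ 2 * (ε / 3) :=
    (diam_mono (hLV.trans hVε) isBounded_ball).trans (diam_ball (by positivity))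
  have hL : loopInBF G L := hεL (by
    rw [mem_preimage, mem_ball, Real.dist_0_eq_abs, abs_of_nonneg diam_nonneg]
    linarith)
  obtain ⟨ρ, hρ⟩ := (loopInBF_iff_exists L).1 hL
  exact (homRelOfSubgroup_iff (ρ.trans γ).toHom).2 (by simpa [L] using hρ)

theorem isOpen_setOf_loopInBF [PathConnectedSpace X]
    (hsmall : ∀ x, ∀ᶠ L in comap (fun L : Path x x => diam (range L)) (𝓝 0), loopInBF G L)
    (y : X) : IsOpen {p : Path y y | loopInBF G p} := by
  refine isOpen_iff_mem_nhds.2 fun p hp => ?_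
  obtain ⟨θ, hθ, hpq⟩ := HomRel.exists_pos_rel_of_forall_dist_lt _
    (fun x => exists_mem_nhds_identifiesPathsIn (hsmall x)) p
  filter_upwards [p.eventually_forall_dist_lt hθ] with q hq
  exact (loopInBF_iff_homRelOfSubgroup q).2 <| Congruence.equivalence.trans
    (Congruence.equivalence.symm (hpq q hq)) ((loopInBF_iff_homRelOfSubgroup p).1 hp)

end LoopInBF

/-- If `X` is a locally path-connected metric space and `G ⊴ π₁(X)` is a normal subgroup
that is not open, then there is a point `y ∈ X` and a sequence of loops `(l n)` based at
`y` with `diam (l n) → 0` such that `[l n] ∉ G` for all `n`. -/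
theorem exists_small_loops_of_not_open {X : Type} [MetricSpace X] [PathConnectedSpace X]
    [LocallyPathConnectedSpace X] (x₀ : X) (G : Subgroup (FundamentalGroup X x₀)) [G.Normal]
    (hnot : ¬ ∀ y : X, IsOpen {p : Path y y | loopInBF G p}) :
    ∃ (y : X) (l : ℕ → Path y y),
      Tendsto (fun n => Metric.diam (Set.range (l n))) atTop (nhds 0) ∧
      ∀ n, ¬ loopInBF G (l n) := by
  by_contra! h
  refine hnot (isOpen_setOf_loopInBF fun x => ?_)
  by_contra hx
  obtain ⟨l, hl, hnl⟩ := frequently_iff_seq_forall.1 (not_eventually.1 hx)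
  have hdiam := tendsto_comap_iff.1 hl
  obtain ⟨n, hn⟩ := h x l hdiam
  exact hnl n hn
end

section
/- Let X be a Polish space with basepoint x, and 𝒫 a pointclass containing the closed sets and closed under continuous images between Polish spaces, finite products, finite intersections, and countable unions. If K ⊆ L_x is in 𝒫, then the normal closure ⟨⟨[K]⟩⟩ in π₁(X,x) of the set of homotopy classes of loops in K is a 𝒫-subgroup. -/
/-!
A loop represents an element of `⟨⟨[K]⟩⟩` iff it is homotopic to a finite concatenation of
conjugates `a⁻¹ * q * a` with `q ∈ K` or `q⁻¹ ∈ K`. The set of such conjugates is the image of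
`L_x × K` under a continuous map, the set of `n`-fold concatenations is built from it by `n`
continuous images of products, and the homotopy relation on `L_x` is the image of `C(I, L_x)`
under evaluation at the endpoints, since a homotopy of loops is exactly a path in `L_x`.
-/

open Set unitInterval

instance ContinuousMap.polishSpace_of_compactSpace {K Y : Type*} [TopologicalSpace K]
    [CompactSpace K] [TopologicalSpace.MetrizableSpace K] [TopologicalSpace Y] [PolishSpace Y] :
    PolishSpace C(K, Y) := by
  let := TopologicalSpace.metrizableSpaceMetric K
  let := TopologicalSpace.upgradeIsCompletelyMetrizable Y
  infer_instance

namespace Path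

variable {X : Type*} [TopologicalSpace X]

theorem isClosedEmbedding_coe [T1Space X] (x y : X) :
    Topology.IsClosedEmbedding ((↑) : Path x y → C(I, X)) := by
  refine ⟨⟨Topology.IsInducing.induced _,
    fun a b h => Path.ext (congrArg (fun f : C(I, X) => ⇑f) h)⟩, ?_⟩
  have hrange : range ((↑) : Path x y → C(I, X)) = {f | f 0 = x} ∩ {f | f 1 = y} := by
    ext f
    constructor
    · rintro ⟨p, rfl⟩
      exact ⟨p.source, p.target⟩
    · rintro ⟨h0, h1⟩
      exact ⟨⟨f, h0, h1⟩, rfl⟩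
  rw [hrange]
  exact (isClosed_singleton.preimage (continuous_eval_const 0)).inter
    (isClosed_singleton.preimage (continuous_eval_const 1))

instance polishSpace [PolishSpace X] (x y : X) : PolishSpace (Path x y) :=
  (isClosedEmbedding_coe x y).polishSpace

theorem homotopic_iff_joined {x y : X} {p q : Path x y} : p.Homotopic q ↔ Joined p q := by
  constructor
  · rintro ⟨H⟩
    have hcont : Continuous H.eval :=
      continuous_uncurry_iff.mp (H.continuous.congr fun _ => rfl)
    exact ⟨⟨⟨H.eval, hcont⟩, H.eval_zero, H.eval_one⟩⟩
  · rintro ⟨γ⟩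
    refine ⟨⟨⟨⟨fun st => γ st.1 st.2, continuous_uncurry_iff.mpr γ.continuous⟩, ?_, ?_⟩, ?_⟩⟩
    · intro t
      simp
    · intro t
      simp
    · rintro s t (rfl | rfl) <;> simp

end Path

theorem setOf_joined_eq_range (Y : Type*) [TopologicalSpace Y] :
    {z : Y × Y | Joined z.1 z.2} = range (fun g : C(I, Y) => (g 0, g 1)) := by
  ext ⟨a, b⟩
  constructor
  · rintro ⟨γ⟩
    exact ⟨γ.toContinuousMap, by simp⟩
  · rintro ⟨g, hg⟩
    simp only [Prod.mk.injEq] at hg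
    exact ⟨⟨g, hg.1, hg.2⟩⟩

namespace Pointclass

variable (P : (Z : Type) → [TopologicalSpace Z] → Set (Set Z))

def ContainsClosedSets : Prop :=
  ∀ (Z : Type) [TopologicalSpace Z] (C : Set Z), IsClosed C → C ∈ P Z

def ClosedUnderContinuousImage : Prop :=
  ∀ (Z W : Type) [TopologicalSpace Z] [PolishSpace Z] [TopologicalSpace W] [PolishSpace W]
    (f : Z → W), Continuous f → ∀ S ∈ P Z, f '' S ∈ P W

def ClosedUnderProd : Prop :=
  ∀ (Z W : Type) [TopologicalSpace Z] [TopologicalSpace W],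
    ∀ S ∈ P Z, ∀ T ∈ P W, S ×ˢ T ∈ P (Z × W)

def ClosedUnderInter : Prop :=
  ∀ (Z : Type) [TopologicalSpace Z], ∀ S ∈ P Z, ∀ T ∈ P Z, S ∩ T ∈ P Z

def ClosedUnderIUnion : Prop :=
  ∀ (Z : Type) [TopologicalSpace Z] (S : ℕ → Set Z), (∀ n, S n ∈ P Z) → (⋃ n, S n) ∈ P Z

variable {P}

theorem union_mem (hunion : ClosedUnderIUnion P) {Z : Type} [TopologicalSpace Z]
    {S T : Set Z} (hS : S ∈ P Z) (hT : T ∈ P Z) : S ∪ T ∈ P Z := by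
  have hST : S ∪ T = ⋃ n : ℕ, if n = 0 then S else T := by
    ext z
    simp only [mem_union, mem_iUnion]
    constructor
    · rintro (hz | hz)
      · exact ⟨0, by simpa using hz⟩
      · exact ⟨1, by simpa using hz⟩
    · rintro ⟨n, hn⟩
      split_ifs at hn
      exacts [Or.inl hn, Or.inr hn]
  rw [hST]
  exact hunion Z _ fun n => by split_ifs <;> assumption

theorem setOf_joined_mem (hclosed : ContainsClosedSets P)
    (himage : ClosedUnderContinuousImage P) (Y : Type) [TopologicalSpace Y] [PolishSpace Y] :
    {z : Y × Y | Joined z.1 z.2} ∈ P (Y × Y) := by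
  rw [setOf_joined_eq_range, ← image_univ]
  exact himage _ _ _ (by fun_prop) _ (hclosed _ _ isClosed_univ)

theorem setOf_exists_joined_mem (hclosed : ContainsClosedSets P)
    (himage : ClosedUnderContinuousImage P) (hprod : ClosedUnderProd P)
    (hinter : ClosedUnderInter P) {Y : Type} [TopologicalSpace Y] [PolishSpace Y]
    {S : Set Y} (hS : S ∈ P Y) : {y | ∃ s ∈ S, Joined y s} ∈ P Y := by
  have hsat : {y | ∃ s ∈ S, Joined y s} =
      Prod.fst '' ({z : Y × Y | Joined z.1 z.2} ∩ univ ×ˢ S) := by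
    ext y
    simp [and_comm]
  rw [hsat]
  exact himage _ _ _ continuous_fst _ <| hinter _ _ (setOf_joined_mem hclosed himage Y) _ <|
    hprod _ _ _ (hclosed _ _ isClosed_univ) _ hS

end Pointclass

section Loops

variable {X : Type} [TopologicalSpace X] {x : X}

abbrev loopClass (p : Path x x) : FundamentalGroup X x :=
  FundamentalGroup.fromPath ⟦p⟧

theorem loopClass_trans (p q : Path x x) : loopClass (p.trans q) = loopClass q * loopClass p :=
  rfl

theorem loopClass_symm (p : Path x x) : loopClass p.symm = (loopClass p)⁻¹ :=
  rfl

theorem loopClass_refl : loopClass (Path.refl x) = 1 :=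
  rfl

theorem loopClass_surjective : Function.Surjective (loopClass (x := x)) :=
  fun γ => Quotient.exists_rep (γ.toPath : Path.Homotopic.Quotient x x)

theorem loopClass_eq_iff {p q : Path x x} : loopClass p = loopClass q ↔ p.Homotopic q :=
  Quotient.eq

theorem preimage_image_loopClass (A : Set (Path x x)) :
    loopClass ⁻¹' (loopClass '' A) = {p | ∃ q ∈ A, Joined p q} := by
  ext p
  simp only [mem_preimage, mem_image, mem_ofPred_eq, loopClass_eq_iff,
    ← Path.homotopic_iff_joined]
  exact ⟨fun ⟨q, hq, h⟩ => ⟨q, hq, h.symm⟩, fun ⟨q, hq, h⟩ => ⟨q, hq, h.symm⟩⟩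

def transWords (S : Set (Path x x)) : ℕ → Set (Path x x)
  | 0 => {Path.refl x}
  | n + 1 => (fun z : Path x x × Path x x => z.1.trans z.2) '' (transWords S n ×ˢ S)

theorem closure_image_loopClass (S : Set (Path x x)) :
    (Subgroup.closure (loopClass '' S) : Set (FundamentalGroup X x)) =
      loopClass '' ⋃ n, transWords (S ∪ Path.symm '' S) n := by
  apply Subset.antisymm
  · intro γ hγ
    induction hγ using Subgroup.closure_induction_left with
    | one => exact ⟨Path.refl x, mem_iUnion.mpr ⟨0, rfl⟩, loopClass_refl⟩
    | mul_left _ hs _ _ ih =>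
      obtain ⟨s, hs, rfl⟩ := hs
      obtain ⟨w, hw, rfl⟩ := ih
      obtain ⟨n, hw⟩ := mem_iUnion.mp hw
      exact ⟨w.trans s, mem_iUnion.mpr ⟨n + 1, ⟨(w, s), ⟨hw, Or.inl hs⟩, rfl⟩⟩, rfl⟩
    | inv_mul_cancel _ hs _ _ ih =>
      obtain ⟨s, hs, rfl⟩ := hs
      obtain ⟨w, hw, rfl⟩ := ih
      obtain ⟨n, hw⟩ := mem_iUnion.mp hw
      exact ⟨w.trans s.symm,
        mem_iUnion.mpr ⟨n + 1, ⟨(w, s.symm), ⟨hw, Or.inr (mem_image_of_mem _ hs)⟩, rfl⟩⟩, rfl⟩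
  · rintro _ ⟨w, hw, rfl⟩
    rw [mem_iUnion] at hw
    obtain ⟨n, hw⟩ := hw
    induction n generalizing w with
    | zero =>
      rw [transWords, mem_singleton_iff] at hw
      subst hw
      exact one_mem _
    | succ n ih =>
      obtain ⟨⟨u, s⟩, ⟨hu, hs⟩, rfl⟩ := hw
      rw [SetLike.mem_coe, loopClass_trans]
      refine mul_mem ?_ (ih u hu)
      rcases hs with hs | ⟨s, hs, rfl⟩
      · exact Subgroup.subset_closure (mem_image_of_mem _ hs)
      · rw [loopClass_symm]
        exact inv_mem (Subgroup.subset_closure (mem_image_of_mem _ hs))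

noncomputable def loopConj (z : Path x x × Path x x) : Path x x :=
  (z.1.symm.trans z.2).trans z.1

theorem continuous_loopConj : Continuous (loopConj (x := x)) :=
  ((Path.continuous_symm.comp continuous_fst).path_trans continuous_snd).path_trans continuous_fst

theorem conjugatesOfSet_image_loopClass (K : Set (Path x x)) :
    Group.conjugatesOfSet (loopClass '' K) = loopClass '' (loopConj '' univ ×ˢ K) := by
  ext γ
  simp only [Group.mem_conjugatesOfSet_iff, isConj_iff, exists_exists_and_eq_and, image_image,
    mem_image, mem_prod, mem_univ, true_and, Prod.exists, loopConj, loopClass_trans,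
    loopClass_symm]
  constructor
  · rintro ⟨q, hq, c, rfl⟩
    obtain ⟨a, rfl⟩ := loopClass_surjective c
    exact ⟨a, q, hq, by group⟩
  · rintro ⟨a, q, hq, rfl⟩
    exact ⟨q, hq, loopClass a, by group⟩

end Loops

namespace Pointclass

variable {P : (Z : Type) → [TopologicalSpace Z] → Set (Set Z)}
  {X : Type} [TopologicalSpace X] [PolishSpace X] {x : X}

theorem transWords_mem (hclosed : ContainsClosedSets P) (himage : ClosedUnderContinuousImage P)
    (hprod : ClosedUnderProd P) {S : Set (Path x x)} (hS : S ∈ P (Path x x)) (n : ℕ) :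
    transWords S n ∈ P (Path x x) := by
  induction n with
  | zero => exact hclosed _ _ isClosed_singleton
  | succ n ih => exact himage _ _ _ Path.continuous_trans _ (hprod _ _ _ ih _ hS)

theorem preimage_closure_image_loopClass_mem (hclosed : ContainsClosedSets P)
    (himage : ClosedUnderContinuousImage P) (hprod : ClosedUnderProd P)
    (hinter : ClosedUnderInter P) (hunion : ClosedUnderIUnion P) {S : Set (Path x x)}
    (hS : S ∈ P (Path x x)) :
    loopClass ⁻¹' (Subgroup.closure (loopClass '' S) : Set (FundamentalGroup X x)) ∈
      P (Path x x) := by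
  have hsymm : S ∪ Path.symm '' S ∈ P (Path x x) :=
    union_mem hunion hS (himage _ _ _ Path.continuous_symm _ hS)
  rw [closure_image_loopClass, preimage_image_loopClass]
  exact setOf_exists_joined_mem hclosed himage hprod hinter <|
    hunion _ _ (transWords_mem hclosed himage hprod hsymm)

end Pointclass

open Pointclass in
theorem normalClosure_mem_pointclass_general
    (P : (Z : Type) → [inst : TopologicalSpace Z] → Set (Set Z))
    (hclosed : ∀ (Z : Type) [TopologicalSpace Z] (C : Set Z), IsClosed C → C ∈ P Z)
    (himage : ∀ (Z W : Type) [TopologicalSpace Z] [PolishSpace Z]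
      [TopologicalSpace W] [PolishSpace W] (f : Z → W),
      Continuous f → ∀ S ∈ P Z, f '' S ∈ P W)
    (hprod : ∀ (Z W : Type) [TopologicalSpace Z] [TopologicalSpace W],
      ∀ S ∈ P Z, ∀ T ∈ P W, S ×ˢ T ∈ P (Z × W))
    (hinter : ∀ (Z : Type) [TopologicalSpace Z], ∀ S ∈ P Z, ∀ T ∈ P Z, S ∩ T ∈ P Z)
    (hunion : ∀ (Z : Type) [TopologicalSpace Z] (S : ℕ → Set Z),
      (∀ n, S n ∈ P Z) → (⋃ n, S n) ∈ P Z)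
    {X : Type} [MetricSpace X] [PolishSpace X] (x : X)
    (K : Set (Path x x)) (hK : K ∈ P (Path x x)) :
    {p : Path x x |
      FundamentalGroup.fromPath (X := TopCat.of X) (⟦p⟧ : Path.Homotopic.Quotient x x) ∈
        Subgroup.normalClosure {γ : FundamentalGroup X x | ∃ q ∈ K,
          γ = FundamentalGroup.fromPath (X := TopCat.of X)
            (⟦q⟧ : Path.Homotopic.Quotient x x)}} ∈ P (Path x x) := by
  have hconj : loopConj '' univ ×ˢ K ∈ P (Path x x) :=
    himage _ _ _ continuous_loopConj _ (hprod _ _ _ (hclosed _ _ isClosed_univ) _ hK)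
  have hK' : {γ : FundamentalGroup X x | ∃ q ∈ K, γ = loopClass q} = loopClass '' K := by
    ext γ
    exact exists_congr fun q => and_congr_right fun _ => eq_comm
  change loopClass ⁻¹' (Subgroup.normalClosure {γ | ∃ q ∈ K, γ = loopClass q} :
    Set (FundamentalGroup X x)) ∈ P (Path x x)
  rw [hK', Subgroup.normalClosure, conjugatesOfSet_image_loopClass]
  exact preimage_closure_image_loopClass_mem hclosed himage hprod hinter hunion hconj

/-- Let `X` be a Polish space with basepoint `x` and `𝒫` a pointclass containing the
closed sets and closed under continuous images between Polish spaces, finite products,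
finite intersections, and countable unions.  If `K ⊆ L_x` is a set of loops in `𝒫`, then
the normal closure `⟨⟨[K]⟩⟩` in `π₁(X, x)` of the set of homotopy classes of loops in `K` is
a `𝒫`-subgroup: the set of loops representing its elements is in `𝒫`. -/
theorem normalClosure_mem_pointclass
    (P : (Z : Type) → [inst : TopologicalSpace Z] → Set (Set Z))
    (hclosed : ∀ (Z : Type) [TopologicalSpace Z] (C : Set Z), IsClosed C → C ∈ P Z)
    (himage : ∀ (Z W : Type) [TopologicalSpace Z] [PolishSpace Z]
      [TopologicalSpace W] [PolishSpace W] (f : Z → W),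
      Continuous f → ∀ S ∈ P Z, f '' S ∈ P W)
    (hprod : ∀ (Z W : Type) [TopologicalSpace Z] [TopologicalSpace W],
      ∀ S ∈ P Z, ∀ T ∈ P W, S ×ˢ T ∈ P (Z × W))
    (hinter : ∀ (Z : Type) [TopologicalSpace Z], ∀ S ∈ P Z, ∀ T ∈ P Z, S ∩ T ∈ P Z)
    (hunion : ∀ (Z : Type) [TopologicalSpace Z] (S : ℕ → Set Z),
      (∀ n, S n ∈ P Z) → (⋃ n, S n) ∈ P Z)
    {X : Type} [MetricSpace X] [PolishSpace X] [PathConnectedSpace X] (x : X)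
    (K : Set (Path x x)) (hK : K ∈ P (Path x x)) :
    {p : Path x x |
      FundamentalGroup.fromPath (X := TopCat.of X) (⟦p⟧ : Path.Homotopic.Quotient x x) ∈
        Subgroup.normalClosure {γ : FundamentalGroup X x | ∃ q ∈ K,
          γ = FundamentalGroup.fromPath (X := TopCat.of X)
            (⟦q⟧ : Path.Homotopic.Quotient x x)}} ∈ P (Path x x) :=
  normalClosure_mem_pointclass_general P hclosed himage hprod hinter hunion x K hK
end
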